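/- Let t > 0 satisfy (2π)^{-1/2} ∫_{-t}^{t} e^{-x²/2} dx = 1/2. Then 2·(2π)^{-1/2} e^{-t²/2} > (√(2 ln 2))/2. In other words, the Gaussian surface area of the symmetric interval [−t,t] ⊂ ℝ of Gaussian measure 1/2 is strictly greater than the Gaussian surface area √(2 ln 2)·e^{-ln 2} of the disk in ℝ² of Gaussian measure 1/2. -/
import Mathlib
open Real

set_option maxHeartbeats 1000000 in
theorem stmt_12 (t : ℝ) (ht : 0 < t)
    (h : (2 * π) ^ (-(1 : ℝ) / 2) * ∫ x in (-t)..t, Real.exp (-x ^ 2 / 2) = 1 / 2) :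
    2 * (2 * π) ^ (-(1 : ℝ) / 2) * Real.exp (-t ^ 2 / 2) > Real.sqrt (2 * Real.log 2) / 2 := by
  have hpi := Real.pi_gt_d6
  have hpi' := Real.pi_lt_d2
  have h2pi : (0:ℝ) < 2 * π := by positivity
  have hrpow : (2 * π) ^ (-(1 : ℝ) / 2) = (Real.sqrt (2 * π))⁻¹ := by
    rw [show (-(1:ℝ)/2) = -(1/2) by ring, Real.rpow_neg h2pi.le, ← Real.sqrt_eq_rpow]
  have hs2pi_pos : 0 < Real.sqrt (2 * π) := Real.sqrt_pos.mpr h2pi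
  have hs2pi_lt : Real.sqrt (2 * π) < 2.51 := by
    rw [show (2.51:ℝ) = Real.sqrt (2.51^2) by rw [Real.sqrt_sq]; norm_num]
    exact Real.sqrt_lt_sqrt h2pi.le (by nlinarith)
  -- integral value
  have hI : ∫ x in (-t)..t, Real.exp (-x ^ 2 / 2) = Real.sqrt (2 * π) / 2 := by
    rw [hrpow] at h
    have h2 : Real.sqrt (2*π) * ((Real.sqrt (2*π))⁻¹ * ∫ x in (-t)..t, Real.exp (-x ^ 2 / 2)) = Real.sqrt (2*π) * (1/2) := by rw [h]
    rw [← mul_assoc, mul_inv_cancel₀ hs2pi_pos.ne', one_mul] at h2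
    linarith
  -- continuity / integrability
  have hcont : Continuous fun x : ℝ => Real.exp (-x ^ 2 / 2) := by continuity
  -- t < 0.68
  have ht68 : t < 0.68 := by
    by_contra hle
    push_neg at hle
    have h1 : ∫ x in (-(0.68:ℝ))..(0.68:ℝ), (1 - x^2/2) ≤ ∫ x in (-(0.68:ℝ))..(0.68:ℝ), Real.exp (-x ^ 2 / 2) := by
      apply intervalIntegral.integral_mono_on (by norm_num)
      · exact (Continuous.intervalIntegrable (by continuity) _ _)
      · exact hcont.intervalIntegrable _ _
      · intro x _
        have := Real.add_one_le_exp (-x^2/2)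
        linarith
    have h2 : ∫ x in (-(0.68:ℝ))..(0.68:ℝ), Real.exp (-x ^ 2 / 2) ≤ ∫ x in (-t)..t, Real.exp (-x ^ 2 / 2) := by
      apply intervalIntegral.integral_mono_interval (by linarith) (by norm_num) (by linarith)
      · filter_upwards with x using (Real.exp_pos _).le
      · exact hcont.intervalIntegrable _ _
    have h3 : ∫ x in (-(0.68:ℝ))..(0.68:ℝ), (1 - x^2/2) = 1.36 - 0.68^3/3 := by
      rw [intervalIntegral.integral_sub intervalIntegrable_const
        ((Continuous.intervalIntegrable (by continuity) _ _))]
      simp [intervalIntegral.integral_div, integral_pow]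
      norm_num
    rw [hI] at h2
    nlinarith [h1, h2, h3]
  -- final bound
  have hlog2 : Real.log 2 < 0.6932 := by linarith [Real.log_two_lt_d9]
  have hrhs : Real.sqrt (2 * Real.log 2) / 2 < 0.5888 := by
    have : Real.sqrt (2 * Real.log 2) < 1.1776 := by
      rw [show (1.1776:ℝ) = Real.sqrt (1.1776^2) by rw [Real.sqrt_sq]; norm_num]
      apply Real.sqrt_lt_sqrt (by positivity)
      nlinarith [Real.log_pos (by norm_num : (1:ℝ) < 2)]
    linarith
  have hexp : (0.7688:ℝ) < Real.exp (-t^2/2) := by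
    have := Real.add_one_le_exp (-t^2/2)
    nlinarith
  rw [hrpow]
  have hlhs : (0.61258:ℝ) < 2 * (Real.sqrt (2*π))⁻¹ * Real.exp (-t^2/2) := by
    have h1 : (2.51:ℝ)⁻¹ < (Real.sqrt (2*π))⁻¹ := by
      apply inv_strictAnti₀ hs2pi_pos hs2pi_lt
    have h2 : (0:ℝ) < Real.exp (-t^2/2) := Real.exp_pos _
    nlinarith
  linarith
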